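/- arXiv:1702.01198 — 2 statements merged into one kernel-verified Lean document; each statement's English description precedes it below -/
import Mathlib

section
/- Let t₁, t₂, t¹₁₂, t²₁₂ be nonnegative integers with t₁ ≥ t²₁₂ and t₂ ≥ t¹₁₂, and set c₁ = t₁ + t¹₁₂ + 1, c₂ = t₂ + t²₁₂ + 1. For any b₁ ∈ {0,...,c₁−1} and b₂ ∈ {0,...,c₂−1}, let S₁ = {(b₁ − i) mod c₁ : 0 ≤ i ≤ t₁} and S₂ = {(b₂ − j) mod c₂ : 0 ≤ j ≤ t₂}, viewed as subsets of ℤ. Then |S₁ ∩ S₂| ≥ min(t₂ − t¹₁₂ + 1, t₁ − t²₁₂ + 1) ≥ 1; in particular S₁ ∩ S₂ is nonempty. -/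
lemma jrc_aux_sub (b c T : ℕ) (hc : 0 < c) :
    Finset.image (fun i : ℕ => (((b : ℤ) - i) % c).toNat) (Finset.range T)
      ⊆ Finset.range c := by
  intro x hx
  simp only [Finset.mem_image, Finset.mem_range] at hx ⊢
  obtain ⟨i, _, rfl⟩ := hx
  have h1 : (0 : ℤ) ≤ ((b : ℤ) - i) % c := Int.emod_nonneg _ (by exact_mod_cast hc.ne')
  have h2 : ((b : ℤ) - i) % c < c := Int.emod_lt_of_pos _ (by exact_mod_cast hc)
  omega

lemma jrc_aux_card (b c T : ℕ) (hT : T ≤ c) :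
    (Finset.image (fun i : ℕ => (((b : ℤ) - i) % c).toNat) (Finset.range T)).card
      = T := by
  rcases Nat.eq_zero_or_pos T with rfl | hTpos
  · simp
  have hc : 0 < c := lt_of_lt_of_le hTpos hT
  rw [Finset.card_image_of_injOn, Finset.card_range]
  intro i hi j hj hij
  simp only [Finset.mem_coe, Finset.mem_range] at hi hj
  have hcz : (c : ℤ) ≠ 0 := by exact_mod_cast hc.ne'
  have h1 : (0 : ℤ) ≤ ((b : ℤ) - i) % c := Int.emod_nonneg _ hcz
  have h2 : (0 : ℤ) ≤ ((b : ℤ) - j) % c := Int.emod_nonneg _ hcz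
  have hij' : ((((b : ℤ) - i) % c).toNat = (((b : ℤ) - j) % c).toNat) := hij
  have heq : ((b : ℤ) - i) % c = ((b : ℤ) - j) % c := by omega
  have hmod : ((b : ℤ) - i) ≡ ((b : ℤ) - j) [ZMOD (c : ℤ)] := heq
  have hdvd : (c : ℤ) ∣ ((b : ℤ) - j) - ((b : ℤ) - i) := Int.ModEq.dvd hmod
  have : ((b : ℤ) - j) - ((b : ℤ) - i) = (i : ℤ) - j := by ring
  rw [this] at hdvd
  have habs : ((i : ℤ) - j) = 0 := by
    refine Int.eq_zero_of_abs_lt_dvd hdvd ?_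
    rw [abs_lt]
    constructor <;> [skip; skip] <;> push_cast <;> omega
  omega

/-- JRC intersection lemma: the sets `S₁`, `S₂` of feasible shared-transmitter
values intersect in at least `min (t₂ - t¹₁₂ + 1) (t₁ - t²₁₂ + 1) ≥ 1` points. -/
theorem jrc_intersection_nonempty (t₁ t₂ s₁ s₂ : ℕ)
    (h₁ : s₂ ≤ t₁) (h₂ : s₁ ≤ t₂)
    (c₁ c₂ : ℕ) (hc₁ : c₁ = t₁ + s₁ + 1) (hc₂ : c₂ = t₂ + s₂ + 1)
    (b₁ b₂ : ℕ) (hb₁ : b₁ < c₁) (hb₂ : b₂ < c₂)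
    (S₁ S₂ : Finset ℕ)
    (hS₁ : S₁ = Finset.image (fun i : ℕ => (((b₁ : ℤ) - i) % c₁).toNat)
      (Finset.range (t₁ + 1)))
    (hS₂ : S₂ = Finset.image (fun j : ℕ => (((b₂ : ℤ) - j) % c₂).toNat)
      (Finset.range (t₂ + 1))) :
    min (t₂ - s₁ + 1) (t₁ - s₂ + 1) ≤ (S₁ ∩ S₂).card ∧ (S₁ ∩ S₂).Nonempty := by
  have hc₁pos : 0 < c₁ := by omega
  have hc₂pos : 0 < c₂ := by omega
  have hS₁sub : S₁ ⊆ Finset.range c₁ := hS₁ ▸ jrc_aux_sub b₁ c₁ (t₁ + 1) hc₁pos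
  have hS₂sub : S₂ ⊆ Finset.range c₂ := hS₂ ▸ jrc_aux_sub b₂ c₂ (t₂ + 1) hc₂pos
  have hS₁card : S₁.card = t₁ + 1 := hS₁ ▸ jrc_aux_card b₁ c₁ (t₁ + 1) (by omega)
  have hS₂card : S₂.card = t₂ + 1 := hS₂ ▸ jrc_aux_card b₂ c₂ (t₂ + 1) (by omega)
  set m := min c₁ c₂ with hm
  have hkey₁ : (Finset.range m \ S₁).card ≤ s₁ := by
    have hsub : Finset.range m \ S₁ ⊆ Finset.range c₁ \ S₁ :=
      Finset.sdiff_subset_sdiff (Finset.range_subset_range.2 (min_le_left _ _)) (le_refl _)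
    have := Finset.card_le_card hsub
    rw [Finset.card_sdiff_of_subset hS₁sub, Finset.card_range, hS₁card] at this
    omega
  have hkey₂ : (Finset.range m \ S₂).card ≤ s₂ := by
    have hsub : Finset.range m \ S₂ ⊆ Finset.range c₂ \ S₂ :=
      Finset.sdiff_subset_sdiff (Finset.range_subset_range.2 (min_le_right _ _)) (le_refl _)
    have := Finset.card_le_card hsub
    rw [Finset.card_sdiff_of_subset hS₂sub, Finset.card_range, hS₂card] at this
    omega
  have hsub : Finset.range m \ ((Finset.range m \ S₁) ∪ (Finset.range m \ S₂))
      ⊆ S₁ ∩ S₂ := by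
    intro x hx
    simp only [Finset.mem_sdiff, Finset.mem_union, Finset.mem_inter, not_or,
      not_and, not_not] at hx ⊢
    tauto
  have hbig : m - s₁ - s₂ ≤ (S₁ ∩ S₂).card := by
    have h3 := Finset.card_le_card hsub
    have h4 : (Finset.range m).card ≤
        (Finset.range m \ ((Finset.range m \ S₁) ∪ (Finset.range m \ S₂))).card
        + ((Finset.range m \ S₁) ∪ (Finset.range m \ S₂)).card :=
      Finset.card_le_card_sdiff_add_card
    have h5 := Finset.card_union_le (Finset.range m \ S₁) (Finset.range m \ S₂)
    rw [Finset.card_range] at h4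
    omega
  have hmin : min (t₂ - s₁ + 1) (t₁ - s₂ + 1) ≤ m - s₁ - s₂ := by
    rw [hm]
    rcases min_cases c₁ c₂ with ⟨he, _⟩ | ⟨he, _⟩ <;> rw [he] <;> omega
  refine ⟨le_trans hmin hbig, Finset.card_pos.1 ?_⟩
  omega
end

section
/- Under the assumptions t₁ ≥ t²₁₂, t₂ ≥ t¹₁₂, t¹₁₂ + t²₁₂ ≤ t₁₂, with c₁ = t₁ + t¹₁₂ + 1 and c₂ = t₂ + t²₁₂ + 1, the minimum element x*₁₂ of S₁ ∩ S₂ (as defined in the JRC encoding) satisfies x*₁₂ ≤ t₁₂. -/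
lemma jrc_card (b c t : ℕ) (ht : t + 1 ≤ c) :
    (Finset.image (fun i : ℕ => (((b : ℤ) - i) % c).toNat)
      (Finset.range (t + 1))).card = t + 1 := by
  rw [Finset.card_image_of_injOn, Finset.card_range]
  intro i hi j hj hij
  simp only [Finset.coe_range, Set.mem_Iio] at hi hj
  have hc0 : (c : ℤ) ≠ 0 := by omega
  have h1 := Int.emod_nonneg ((b:ℤ) - i) hc0
  have h2 := Int.emod_nonneg ((b:ℤ) - j) hc0
  simp only at hij
  have heq : ((b:ℤ) - i) % c = ((b:ℤ) - j) % c := by omega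
  have hd : (c:ℤ) ∣ ((b:ℤ) - j) - ((b:ℤ) - i) := Int.ModEq.dvd heq
  have hz := Int.eq_zero_of_abs_lt_dvd hd (by rw [abs_lt]; omega)
  omega

lemma jrc_sub (b c t : ℕ) (hb : b < c) :
    (Finset.image (fun i : ℕ => (((b : ℤ) - i) % c).toNat)
      (Finset.range (t + 1))) ⊆ Finset.range c := by
  intro x hx
  simp only [Finset.mem_image] at hx
  obtain ⟨i, _, rfl⟩ := hx
  have hc0 : (c : ℤ) ≠ 0 := by omega
  have h1 := Int.emod_nonneg ((b:ℤ) - i) hc0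
  have h2 := Int.emod_lt_of_pos ((b:ℤ) - i) (by omega : (0:ℤ) < c)
  simp only [Finset.mem_range]
  omega

/-- The minimum element of `S₁ ∩ S₂` chosen by the JRC encoder is at most the
number `t₁₂` of shared transmitters. -/
theorem jrc_min_le_shared (t₁ t₂ s₁ s₂ t₁₂ : ℕ)
    (h₁ : s₂ ≤ t₁) (h₂ : s₁ ≤ t₂) (h₁₂ : s₁ + s₂ ≤ t₁₂)
    (c₁ c₂ : ℕ) (hc₁ : c₁ = t₁ + s₁ + 1) (hc₂ : c₂ = t₂ + s₂ + 1)
    (b₁ b₂ : ℕ) (hb₁ : b₁ < c₁) (hb₂ : b₂ < c₂)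
    (S₁ S₂ : Finset ℕ)
    (hS₁ : S₁ = Finset.image (fun i : ℕ => (((b₁ : ℤ) - i) % c₁).toNat)
      (Finset.range (t₁ + 1)))
    (hS₂ : S₂ = Finset.image (fun j : ℕ => (((b₂ : ℤ) - j) % c₂).toNat)
      (Finset.range (t₂ + 1)))
    (hne : (S₁ ∩ S₂).Nonempty) :
    (S₁ ∩ S₂).min' hne ≤ t₁₂ := by
  have hsub₁ : S₁ ⊆ Finset.range c₁ := hS₁ ▸ jrc_sub b₁ c₁ t₁ hb₁
  have hsub₂ : S₂ ⊆ Finset.range c₂ := hS₂ ▸ jrc_sub b₂ c₂ t₂ hb₂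
  have hmin := Finset.min'_mem (S₁ ∩ S₂) hne
  rw [Finset.mem_inter] at hmin
  -- trivial cases
  by_cases hc₁t : c₁ ≤ t₁₂ + 1
  · have := Finset.mem_range.mp (hsub₁ hmin.1); omega
  by_cases hc₂t : c₂ ≤ t₁₂ + 1
  · have := Finset.mem_range.mp (hsub₂ hmin.2); omega
  -- main case
  have hcard₁ : S₁.card = t₁ + 1 := hS₁ ▸ jrc_card b₁ c₁ t₁ (by omega)
  have hcard₂ : S₂.card = t₂ + 1 := hS₂ ▸ jrc_card b₂ c₂ t₂ (by omega)
  set R := Finset.range (t₁₂ + 1) with hR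
  have hRsub₁ : R ⊆ Finset.range c₁ := by
    apply Finset.range_subset_range.mpr; omega
  have hRsub₂ : R ⊆ Finset.range c₂ := by
    apply Finset.range_subset_range.mpr; omega
  have hd₁ : (R \ S₁).card ≤ s₁ := by
    have hsub : R \ S₁ ⊆ Finset.range c₁ \ S₁ := Finset.sdiff_subset_sdiff hRsub₁ le_rfl
    have := Finset.card_le_card hsub
    rw [Finset.card_sdiff_of_subset hsub₁] at this
    simp only [Finset.card_range] at this
    omega
  have hd₂ : (R \ S₂).card ≤ s₂ := by
    have hsub : R \ S₂ ⊆ Finset.range c₂ \ S₂ := Finset.sdiff_subset_sdiff hRsub₂ le_rfl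
    have := Finset.card_le_card hsub
    rw [Finset.card_sdiff_of_subset hsub₂] at this
    simp only [Finset.card_range] at this
    omega
  -- find x ≤ t₁₂ in S₁ ∩ S₂
  have hex : ∃ x ∈ R, x ∈ S₁ ∩ S₂ := by
    by_contra hcon
    push_neg at hcon
    have hRsub : R ⊆ (R \ S₁) ∪ (R \ S₂) := by
      intro x hx
      have := hcon x hx
      rw [Finset.mem_inter] at this
      simp only [Finset.mem_union, Finset.mem_sdiff]
      tauto
    have := Finset.card_le_card hRsub
    have hcu := Finset.card_union_le (R \ S₁) (R \ S₂)
    have hRc : R.card = t₁₂ + 1 := Finset.card_range _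
    omega
  obtain ⟨x, hxR, hxS⟩ := hex
  have := Finset.min'_le (S₁ ∩ S₂) x hxS
  have := Finset.mem_range.mp hxR
  omega
end
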